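/- Let Γ be a simple graph on a finite vertex set V, let s, t ∈ V be distinct vertices not adjacent in Γ, and let Γ ∪ e be Γ with the edge e = (s, t) added. Let 𝒞 be the family consisting of all maximal cliques of Γ together with all sets of the form (ℓ_s ∩ ℓ_t) ∪ {s, t}, where ℓ_s and ℓ_t range over the maximal cliques of Γ containing s and t respectively. Then the maximal cliques of Γ ∪ e are exactly the members of 𝒞 that are maximal in 𝒞 with respect to set inclusion. -/

import Mathlib

/-!
A set is a clique of `Γ ⊔ edge s t` iff deleting `s`, and deleting `t`, both leave cliques of `Γ`.
Hence every member of `𝒞` is a clique of `Γ ∪ e`, and every maximal clique `ℓ` of `Γ ∪ e` lies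
in `𝒞`: if `ℓ` misses `s` or `t` it is a maximal clique of `Γ`; otherwise, extending `ℓ \ {t}`
and `ℓ \ {s}` to maximal cliques `ℓs`, `ℓt` of `Γ` gives `ℓ ⊆ (ℓs ∩ ℓt) ∪ {s, t}`, with equality by
maximality. On a finite vertex set, any family squeezed between the maximal cliques and all
cliques has exactly the maximal cliques as its inclusion-maximal members.
-/

/-- A maximal clique of a simple graph: a clique not properly contained in any other clique. -/
def IsMaxClique {V : Type*} (G : SimpleGraph V) (c : Set V) : Prop :=
  G.IsClique c ∧ ∀ d : Set V, G.IsClique d → c ⊆ d → c = d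

/-- The candidate family `𝒞`: all maximal cliques of `Γ`, together with all sets
`(ℓs ∩ ℓt) ∪ {s, t}` for maximal cliques `ℓs ∋ s` and `ℓt ∋ t` of `Γ`. -/
def candidateFamily {V : Type*} (Γ : SimpleGraph V) (s t : V) : Set (Set V) :=
  {c | IsMaxClique Γ c} ∪
    {c | ∃ ℓs ℓt : Set V, IsMaxClique Γ ℓs ∧ IsMaxClique Γ ℓt ∧ s ∈ ℓs ∧ t ∈ ℓt ∧
      c = (ℓs ∩ ℓt) ∪ {s, t}}

open SimpleGraph

section

variable {V : Type*}

theorem isMaxClique_iff_maximal (G : SimpleGraph V) (c : Set V) :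
    IsMaxClique G c ↔ Maximal G.IsClique c :=
  and_congr_right fun _ =>
    forall₂_congr fun _ _ => imp_congr_right fun hsub => ⟨fun h => h.ge, subset_antisymm hsub⟩

theorem IsMaxClique.of_le {G H : SimpleGraph V} {c : Set V} (hc : IsMaxClique H c) (hGH : G ≤ H)
    (hGc : G.IsClique c) : IsMaxClique G c := by
  rw [isMaxClique_iff_maximal] at hc ⊢
  exact hc.mono (fun _ hd => hd.mono hGH) hGc

theorem exists_isMaxClique_superset [Finite V] (G : SimpleGraph V) {c : Set V}
    (hc : G.IsClique c) : ∃ d, IsMaxClique G d ∧ c ⊆ d := by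
  obtain ⟨d, hcd, hd⟩ := Finite.exists_le_maximal hc
  exact ⟨d, (isMaxClique_iff_maximal G d).mpr hd, hcd⟩

theorem isMaxClique_iff_maximal_mem_of_subset [Finite V] (G : SimpleGraph V) (F : Set (Set V))
    (hclique : ∀ c ∈ F, G.IsClique c) (hmax : ∀ c, IsMaxClique G c → c ∈ F) (ℓ : Set V) :
    IsMaxClique G ℓ ↔ ℓ ∈ F ∧ ∀ m ∈ F, ℓ ⊆ m → ℓ = m := by
  refine ⟨fun hℓ => ⟨hmax ℓ hℓ, fun m hm => hℓ.2 m (hclique m hm)⟩, ?_⟩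
  rintro ⟨hℓF, hℓ⟩
  refine ⟨hclique ℓ hℓF, fun d hd hℓd => ?_⟩
  obtain ⟨d', hd', hdd'⟩ := exists_isMaxClique_superset G hd
  have hℓd' : ℓ = d' := hℓ d' (hmax d' hd') (hℓd.trans hdd')
  exact hℓd.antisymm (hℓd' ▸ hdd')

section candidateFamily

variable {Γ : SimpleGraph V} {s t : V}

theorem isClique_sup_edge_of_mem_candidateFamily (hst : s ≠ t) {m : Set V}
    (hm : m ∈ candidateFamily Γ s t) : (Γ ⊔ edge s t).IsClique m := by
  rw [isClique_sup_edge_of_ne_iff hst]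
  rcases hm with hm | ⟨ℓs, ℓt, hℓs, hℓt, hs, ht, rfl⟩
  · exact ⟨hm.1.subset Set.sdiff_subset, hm.1.subset Set.sdiff_subset⟩
  · refine ⟨hℓt.1.subset ?_, hℓs.1.subset ?_⟩
    · rintro x ⟨hx | rfl | rfl, hxs⟩
      exacts [hx.2, absurd rfl hxs, ht]
    · rintro x ⟨hx | rfl | rfl, hxt⟩
      exacts [hx.1, hs, absurd rfl hxt]

theorem mem_candidateFamily_of_isMaxClique_sup_edge [Finite V] (hst : s ≠ t) {ℓ : Set V}
    (hℓ : IsMaxClique (Γ ⊔ edge s t) ℓ) : ℓ ∈ candidateFamily Γ s t := by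
  obtain ⟨hℓs, hℓt⟩ := (isClique_sup_edge_of_ne_iff hst).mp hℓ.1
  by_cases hboth : s ∈ ℓ ∧ t ∈ ℓ
  · obtain ⟨Ls, hLs, hℓLs⟩ := exists_isMaxClique_superset Γ hℓt
    obtain ⟨Lt, hLt, hℓLt⟩ := exists_isMaxClique_superset Γ hℓs
    have hmem : (Ls ∩ Lt) ∪ {s, t} ∈ candidateFamily Γ s t :=
      Or.inr ⟨Ls, Lt, hLs, hLt, hℓLs ⟨hboth.1, hst⟩, hℓLt ⟨hboth.2, hst.symm⟩, rfl⟩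
    have hsub : ℓ ⊆ (Ls ∩ Lt) ∪ {s, t} := by
      intro x hx
      by_cases hxs : x = s
      · exact Or.inr (Or.inl hxs)
      by_cases hxt : x = t
      · exact Or.inr (Or.inr hxt)
      exact Or.inl ⟨hℓLs ⟨hx, hxt⟩, hℓLt ⟨hx, hxs⟩⟩
    rw [hℓ.2 _ (isClique_sup_edge_of_mem_candidateFamily hst hmem) hsub]
    exact hmem
  · have hΓℓ : Γ.IsClique ℓ := by
      rcases not_and_or.mp hboth with hs | ht
      · rwa [Set.sdiff_singleton_eq_self hs] at hℓs
      · rwa [Set.sdiff_singleton_eq_self ht] at hℓt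
    exact Or.inl (hℓ.of_le le_sup_left hΓℓ)

end candidateFamily

end

theorem statement_6_general {V : Type*} [Fintype V] (Γ : SimpleGraph V) (s t : V) (hst : s ≠ t)
    (ℓ : Set V) :
    IsMaxClique (Γ ⊔ SimpleGraph.edge s t) ℓ ↔
      ℓ ∈ candidateFamily Γ s t ∧
        ∀ m ∈ candidateFamily Γ s t, ℓ ⊆ m → ℓ = m :=
  isMaxClique_iff_maximal_mem_of_subset _ _
    (fun _ => isClique_sup_edge_of_mem_candidateFamily hst)
    (fun _ => mem_candidateFamily_of_isMaxClique_sup_edge hst) ℓ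

/-- The maximal cliques of `Γ ∪ e` are exactly the members of `𝒞` that are
maximal in `𝒞` with respect to set inclusion. -/
theorem statement_6 {V : Type*} [Fintype V] (Γ : SimpleGraph V) (s t : V) (hst : s ≠ t)
    (hadj : ¬ Γ.Adj s t) (ℓ : Set V) :
    IsMaxClique (Γ ⊔ SimpleGraph.edge s t) ℓ ↔
      ℓ ∈ candidateFamily Γ s t ∧
        ∀ m ∈ candidateFamily Γ s t, ℓ ⊆ m → ℓ = m :=
  statement_6_general Γ s t hst ℓ
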